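/- arXiv:2206.12986 — 2 statements merged into one kernel-verified Lean document; each statement's English description precedes it below -/
import Mathlib

section
/- Non-additivity under collapsing changes: there exist mechanisms f¹, f², f³ : ℝ → ℝ and input values x¹, x², x³ : ℝ such that π^{1→2}(f) + π^{2→3}(f) ≠ π^{1→3}(f), where π^{a→b}(f) := ½(f^b(x^a) − f^a(x^a)) + ½(f^b(x^b) − f^a(x^b)). -/
theorem non_additivity_collapse :
    ∃ (f1 f2 f3 : ℝ → ℝ) (x1 x2 x3 : ℝ),
      ((f2 x1 - f1 x1) / 2 + (f2 x2 - f1 x2) / 2) +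
          ((f3 x2 - f2 x2) / 2 + (f3 x3 - f2 x3) / 2) ≠
        (f3 x1 - f1 x1) / 2 + (f3 x3 - f1 x3) / 2 := by
  exact ⟨0, id, 0, 0, 1, 2, by norm_num⟩
end

section
/- For the fine-grained attribution over {f, x_1, …, x_d} with linear mechanisms f^(k)(x) = ∑_j β_j^(k) x_j, the Shapley value of input variable x_i equals the closed-form linear attribution ((β_i¹ + β_i²)/2)(x_i² − x_i¹). -/
/-!
The marginal contribution of `x_i` to a coalition `A` is `β_i (x²_i - x¹_i)`, where `β_i` is
`β²_i` or `β¹_i` according as the mechanism player does or does not belong to `A`. So the Shapley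
value of `x_i` is `(x²_i - x¹_i)` times a weighted average of `β¹_i` and `β²_i`, and the weight of
`β²_i` is the total Shapley weight of the coalitions containing the mechanism player. That weight
is `1/2`: complementation `A ↦ S \ A` preserves Shapley weights and exchanges the coalitions
containing a fixed player with those not containing it, while all the weights add up to `1`.
-/

open Finset

noncomputable section

/-- `n` counts the players other than the one being valued, `k` the size of the coalition. -/
def shapleyWeight (n k : ℕ) : ℝ := (k.factorial * (n - k).factorial : ℝ) / (n + 1).factorial

lemma shapleyWeight_sub {n k : ℕ} (h : k ≤ n) : shapleyWeight n (n - k) = shapleyWeight n k := by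
  rw [shapleyWeight, shapleyWeight, Nat.sub_sub_self h, mul_comm]

lemma choose_mul_shapleyWeight {n k : ℕ} (h : k ≤ n) :
    (n.choose k : ℝ) * shapleyWeight n k = 1 / (n + 1) := by
  have hfac : ((n.choose k * k.factorial * (n - k).factorial : ℕ) : ℝ) = n.factorial := by
    rw [Nat.choose_mul_factorial_mul_factorial h]
  push_cast at hfac
  rw [shapleyWeight, Nat.factorial_succ, ← mul_div_assoc, ← mul_assoc, hfac]
  push_cast
  field_simp

variable {α : Type*}

lemma sum_powerset_shapleyWeight (S : Finset α) :
    ∑ A ∈ S.powerset, shapleyWeight #S #A = 1 := by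
  rw [sum_powerset_apply_card]
  calc ∑ k ∈ range (#S + 1), (#S).choose k • shapleyWeight #S k
      = ∑ _k ∈ range (#S + 1), 1 / ((#S : ℝ) + 1) := by
        refine sum_congr rfl fun k hk => ?_
        rw [nsmul_eq_mul, choose_mul_shapleyWeight (Nat.lt_succ_iff.mp (mem_range.mp hk))]
    _ = 1 := by
        rw [sum_const, card_range, nsmul_eq_mul]
        push_cast
        field_simp

variable [DecidableEq α]

lemma sum_powerset_filter_mem_shapleyWeight_eq_not_mem {S : Finset α} {p : α} (hp : p ∈ S) :
    ∑ A ∈ S.powerset with p ∈ A, shapleyWeight #S #A =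
      ∑ A ∈ S.powerset with p ∉ A, shapleyWeight #S #A := by
  refine sum_nbij' (S \ ·) (S \ ·) ?_ ?_ ?_ ?_ ?_
  · intro A hA
    simp only [mem_filter, mem_powerset] at hA ⊢
    exact ⟨sdiff_subset, fun h => (mem_sdiff.mp h).2 hA.2⟩
  · intro A hA
    simp only [mem_filter, mem_powerset] at hA ⊢
    exact ⟨sdiff_subset, mem_sdiff.mpr ⟨hp, hA.2⟩⟩
  · intro A hA
    simp only [mem_filter, mem_powerset] at hA
    exact Finset.sdiff_sdiff_eq_self hA.1
  · intro A hA
    simp only [mem_filter, mem_powerset] at hA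
    exact Finset.sdiff_sdiff_eq_self hA.1
  · intro A hA
    have hAS : A ⊆ S := mem_powerset.mp (mem_filter.mp hA).1
    rw [card_sdiff_of_subset hAS, shapleyWeight_sub (card_le_card hAS)]

lemma sum_powerset_shapleyWeight_mul_ite {S : Finset α} {p : α} (hp : p ∈ S) (a b : ℝ) :
    ∑ A ∈ S.powerset, shapleyWeight #S #A * (if p ∈ A then a else b) = (a + b) / 2 := by
  have htotal := sum_powerset_shapleyWeight S
  rw [← sum_filter_add_sum_filter_not _ (p ∈ ·),
    ← sum_powerset_filter_mem_shapleyWeight_eq_not_mem hp] at htotal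
  simp only [mul_ite, sum_ite, ← sum_mul, ← sum_powerset_filter_mem_shapleyWeight_eq_not_mem hp]
  linear_combination (a + b) / 2 * htotal

/-- Player `0` is the mechanism, player `j.succ` the input variable `j`. -/
def linearGame {d : ℕ} (β1 β2 x1 x2 : Fin d → ℝ) (A : Finset (Fin (d + 1))) : ℝ :=
  ∑ j, (if (0 : Fin (d + 1)) ∈ A then β2 j else β1 j) *
    (if (j.succ : Fin (d + 1)) ∈ A then x2 j else x1 j)

lemma linearGame_union_succ_sub {d : ℕ} (β1 β2 x1 x2 : Fin d → ℝ) {i : Fin d}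
    {A : Finset (Fin (d + 1))} (hA : i.succ ∉ A) :
    linearGame β1 β2 x1 x2 (A ∪ {i.succ}) - linearGame β1 β2 x1 x2 A =
      (if (0 : Fin (d + 1)) ∈ A then β2 i else β1 i) * (x2 i - x1 i) := by
  have h0 : (0 : Fin (d + 1)) ∈ A ∪ {i.succ} ↔ 0 ∈ A := by
    simp [(Fin.succ_ne_zero i).symm]
  rw [linearGame, linearGame, ← sum_sub_distrib, sum_eq_single i]
  · simp only [h0, mem_union, mem_singleton, or_true, if_true, if_neg hA]
    ring
  · intro j _ hj
    simp [(Fin.succ_ne_zero i).symm, Fin.succ_inj, hj]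
  · exact fun h => (h (mem_univ i)).elim

end

theorem fine_shapley_linear_input (d : ℕ) (β1 β2 x1 x2 : Fin d → ℝ) :
    let v : Finset (Fin (d + 1)) → ℝ := fun A =>
      ∑ j, (if (0 : Fin (d + 1)) ∈ A then β2 j else β1 j) *
        (if (j.succ : Fin (d + 1)) ∈ A then x2 j else x1 j)
    let φ : Fin (d + 1) → ℝ := fun w =>
      ∑ A ∈ (Finset.univ \ {w}).powerset,
        ((A.card.factorial * (d - A.card).factorial : ℝ) / (d + 1).factorial) *
          (v (A ∪ {w}) - v A)
    ∀ i : Fin d, φ i.succ = ((β1 i + β2 i) / 2) * (x2 i - x1 i) := by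
  intro v φ i
  set S : Finset (Fin (d + 1)) := univ \ {i.succ}
  have hS : #S = d := by simp [S, card_sdiff_of_subset]
  have h0S : (0 : Fin (d + 1)) ∈ S := by simp [S, (Fin.succ_ne_zero i).symm]
  calc φ i.succ
      = ∑ A ∈ S.powerset, shapleyWeight #S #A *
          (if (0 : Fin (d + 1)) ∈ A then β2 i else β1 i) * (x2 i - x1 i) := by
        refine sum_congr rfl fun A hA => ?_
        have hiA : i.succ ∉ A := fun h =>
          (mem_sdiff.mp (mem_powerset.mp hA h)).2 (mem_singleton_self _)
        rw [mul_assoc, ← linearGame_union_succ_sub β1 β2 x1 x2 hiA, hS]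
        rfl
    _ = ((β1 i + β2 i) / 2) * (x2 i - x1 i) := by
        rw [← sum_mul, sum_powerset_shapleyWeight_mul_ite h0S, add_comm]
end
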